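/- Consider clustering by starting times: given a weighted graph G = (V, E, w), Δ > 0, a set N ⊆ V of centers with d_G(v, N) ≤ Δ for every v ∈ V, values δ_x ∈ [0, Δ] for each x ∈ N, and a fixed linear order on N, every vertex v joins the cluster C_x of the center x ∈ N maximizing δ_x − d_G(x, v), ties broken by taking the smallest such center in the order. Fix v ∈ V, let x* ∈ N, and suppose there is Υ > 0 such that for every center y ∈ N with y ≠ x*, (δ_{x*} − d_G(x*, v)) − (δ_y − d_G(y, v)) ≥ Υ. Then every vertex u with d_G(v, u) < Υ/2 belongs to C_{x*}. -/
import Mathlib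


open MeasureTheory

namespace Pad

variable {V : Type*}

/-- The weight of a walk: the sum of the weights of its edges. -/
def walkWeight (w : Sym2 V → ℝ) {G : SimpleGraph V} {u v : V} (p : G.Walk u v) : ℝ :=
  (p.darts.map fun d => w d.edge).sum

/-- Shortest-path distance in the weighted graph `(G, w)`. -/
noncomputable def wdist (w : Sym2 V → ℝ) (G : SimpleGraph V) (u v : V) : ℝ :=
  sInf {x | ∃ p : G.Walk u v, x = walkWeight w p}

/-- Distance from a vertex to a set of vertices. -/
noncomputable def wdistSet (w : Sym2 V → ℝ) (G : SimpleGraph V) (v : V) (A : Set V) : ℝ :=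
  sInf {x | ∃ a ∈ A, x = wdist w G v a}

/-- The closed ball of radius `r` around `v`. -/
def ball (w : Sym2 V → ℝ) (G : SimpleGraph V) (v : V) (r : ℝ) : Set V :=
  {u | wdist w G v u ≤ r}

/-- Weight of a walk of an induced subgraph, measured with the weights of `G`. -/
def walkWeightI (w : Sym2 V → ℝ) {G : SimpleGraph V} {C : Set V} {u v : C}
    (p : (G.induce C).Walk u v) : ℝ :=
  (p.darts.map fun d => w (Sym2.map Subtype.val d.edge)).sum

/-- The cluster `C` has strong diameter at most `Δ`: every two vertices of `C` are joined,
inside the induced subgraph `G[C]`, by a walk of weight at most `Δ`. -/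
def StronglyBounded (w : Sym2 V → ℝ) (G : SimpleGraph V) (C : Set V) (Δ : ℝ) : Prop :=
  ∀ u v : C, ∃ p : (G.induce C).Walk u v, walkWeightI w p ≤ Δ

/-- A partition of `V`, given by the map `cl` sending a vertex to its cluster. -/
structure Partition (V : Type*) where
  cl : V → Set V
  mem_cl : ∀ v, v ∈ cl v
  cl_eq : ∀ u v, u ∈ cl v → cl u = cl v

/-- A partition is strongly `Δ`-bounded if each of its clusters has strong diameter at most `Δ`. -/
def Partition.StronglyBounded (w : Sym2 V → ℝ) (G : SimpleGraph V) (P : Partition V)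
    (Δ : ℝ) : Prop :=
  ∀ v : V, Pad.StronglyBounded w G (P.cl v) Δ

/-- `(G, w)` has doubling dimension `ddim`: every ball of radius `2r` can be covered by
`2 ^ ddim` balls of radius `r`. -/
def Doubling (w : Sym2 V → ℝ) (G : SimpleGraph V) (ddim : ℝ) : Prop :=
  ∀ (x : V) (r : ℝ), 0 < r → ∃ T : Set V, T.Finite ∧ ((T.ncard : ℝ) ≤ (2 : ℝ) ^ ddim) ∧
    ball w G x (2 * r) ⊆ ⋃ y ∈ T, ball w G y r

/-- `G` has the complete graph `K_r` as a minor: there are `r` pairwise disjoint connected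
branch sets with an edge of `G` between any two of them. -/
def HasCliqueMinor (G : SimpleGraph V) (r : ℕ) : Prop :=
  ∃ B : Fin r → Set V,
    (∀ i, (G.induce (B i)).Connected) ∧
    (Pairwise fun i j => Disjoint (B i) (B j)) ∧
    ∀ i j : Fin r, i ≠ j → ∃ u ∈ B i, ∃ v ∈ B j, G.Adj u v

/-- A shortest path: a path whose weight equals the distance between its endpoints. -/
def IsShortestPath (w : Sym2 V → ℝ) (G : SimpleGraph V) {u v : V} (p : G.Walk u v) : Prop :=
  p.IsPath ∧ walkWeight w p = wdist w G u v

/-- `G` has an `r`-core with radius `Δ`: there are at most `r` shortest paths such that every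
vertex is within distance `Δ` of their union. -/
def HasCore (w : Sym2 V → ℝ) (G : SimpleGraph V) (r : ℕ) (Δ : ℝ) : Prop :=
  ∃ r' : ℕ, r' ≤ r ∧ ∃ (a b : Fin r' → V) (p : ∀ i, G.Walk (a i) (b i)),
    (∀ i, IsShortestPath w G (p i)) ∧
    ∀ v : V, ∃ i, ∃ u ∈ (p i).support, wdist w G v u ≤ Δ

section Aux

variable {V : Type*} {G : SimpleGraph V} (w : Sym2 V → ℝ)

lemma walkWeight_nonneg (hw : ∀ e, 0 ≤ w e) {u v : V} (p : G.Walk u v) :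
    0 ≤ Pad.walkWeight w p := by
  apply List.sum_nonneg
  intro x hx
  simp only [List.mem_map] at hx
  obtain ⟨d, -, rfl⟩ := hx
  exact hw _

lemma walkWeight_reverse {u v : V} (p : G.Walk u v) :
    Pad.walkWeight w p.reverse = Pad.walkWeight w p := by
  unfold Pad.walkWeight
  rw [SimpleGraph.Walk.darts_reverse, List.map_reverse, List.sum_reverse, List.map_map]
  congr 1
  ext d
  simp [SimpleGraph.Dart.edge_symm]

lemma walkWeight_append {a b c : V} (p : G.Walk a b) (q : G.Walk b c) :
    Pad.walkWeight w (p.append q) = Pad.walkWeight w p + Pad.walkWeight w q := by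
  unfold Pad.walkWeight
  rw [SimpleGraph.Walk.darts_append, List.map_append, List.sum_append]

lemma wdist_set_nonempty (hG : G.Connected) (u v : V) :
    {x | ∃ p : G.Walk u v, x = Pad.walkWeight w p}.Nonempty := by
  obtain ⟨p⟩ := hG u v
  exact ⟨_, p, rfl⟩

lemma wdist_bddBelow (hw : ∀ e, 0 ≤ w e) (u v : V) :
    BddBelow {x | ∃ p : G.Walk u v, x = Pad.walkWeight w p} := by
  refine ⟨0, fun x hx => ?_⟩
  obtain ⟨p, rfl⟩ := hx
  exact walkWeight_nonneg w hw p

lemma wdist_symm (u v : V) : Pad.wdist w G u v = Pad.wdist w G v u := by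
  unfold Pad.wdist
  congr 1
  ext x
  constructor
  · rintro ⟨p, rfl⟩; exact ⟨p.reverse, (walkWeight_reverse w p).symm⟩
  · rintro ⟨p, rfl⟩; exact ⟨p.reverse, (walkWeight_reverse w p).symm⟩

lemma wdist_triangle (hG : G.Connected) (hw : ∀ e, 0 ≤ w e) (a b c : V) :
    Pad.wdist w G a c ≤ Pad.wdist w G a b + Pad.wdist w G b c := by
  unfold Pad.wdist
  rw [← csInf_add (wdist_set_nonempty w hG a b) (wdist_bddBelow w hw a b)
      (wdist_set_nonempty w hG b c) (wdist_bddBelow w hw b c)]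
  apply csInf_le_csInf (wdist_bddBelow w hw a c)
  · obtain ⟨x, p, hp⟩ := wdist_set_nonempty w hG a b
    obtain ⟨y, q, hq⟩ := wdist_set_nonempty w hG b c
    exact ⟨x + y, ⟨x, ⟨p, hp⟩, y, ⟨q, hq⟩, rfl⟩⟩
  · rintro z ⟨x, ⟨p, rfl⟩, y, ⟨q, rfl⟩, rfl⟩
    exact ⟨p.append q, (walkWeight_append w p q).symm⟩

end Aux

end Pad
/-- In the clustering by starting times, if the value `δ_{x*} - d_G(x*, v)` of
the winning center `x*` of `v` exceeds that of every other center by at least `Υ`, then every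
vertex `u` with `d_G(v,u) < Υ/2` joins the cluster of `x*`. -/
theorem starting_times_padding
    (V : Type) [Fintype V] [LinearOrder V] (G : SimpleGraph V) (hG : G.Connected)
    (w : Sym2 V → ℝ) (hw : ∀ e, 0 ≤ w e)
    (Δ : ℝ) (hΔ : 0 < Δ)
    (N : Set V)
    (hcov : ∀ v : V, ∃ x ∈ N, Pad.wdist w G v x ≤ Δ)
    (δ : V → ℝ) (hδ : ∀ x ∈ N, δ x ∈ Set.Icc (0 : ℝ) Δ)
    -- `f v` is the center whose cluster `v` joins:
    (f : V → V)
    (hfN : ∀ v, f v ∈ N)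
    (hmax : ∀ v, ∀ y ∈ N, δ y - Pad.wdist w G y v ≤ δ (f v) - Pad.wdist w G (f v) v)
    (htie : ∀ v, ∀ y ∈ N, δ y - Pad.wdist w G y v = δ (f v) - Pad.wdist w G (f v) v → f v ≤ y)
    (v : V) (xs : V) (hxs : xs ∈ N) (Υ : ℝ) (hΥ : 0 < Υ)
    (hgap : ∀ y ∈ N, y ≠ xs →
      Υ ≤ (δ xs - Pad.wdist w G xs v) - (δ y - Pad.wdist w G y v))
    (u : V) (hu : Pad.wdist w G v u < Υ / 2) :
    f u = xs := by
  by_contra h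
  have hgap' := hgap (f u) (hfN u) h
  have hmaxu := hmax u xs hxs
  have t1 : Pad.wdist w G xs u ≤ Pad.wdist w G xs v + Pad.wdist w G v u :=
    Pad.wdist_triangle w hG hw xs v u
  have t2 : Pad.wdist w G (f u) v ≤ Pad.wdist w G (f u) u + Pad.wdist w G u v :=
    Pad.wdist_triangle w hG hw (f u) u v
  have hsymm : Pad.wdist w G u v = Pad.wdist w G v u := Pad.wdist_symm w u v
  linarith
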